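/- arXiv:1303.7051 — 5 statements merged into one kernel-verified Lean document; each statement's English description precedes it below -/
import Mathlib

section
/- If a series ∑ aₙ of real numbers is conditionally convergent (convergent but with ∑ |aₙ| divergent), then for each real number x there exists a permutation σ of the positive integers such that ∑ a_{σ(n)} converges to x. -/
noncomputable def rstS (a : ℕ → ℝ) (e f : ℕ → ℕ) (i j : ℕ) : ℝ :=
  (∑ k ∈ Finset.range i, a (e k)) + ∑ k ∈ Finset.range j, a (f k)

noncomputable def rstState (a : ℕ → ℝ) (e f : ℕ → ℕ) (x : ℝ) : ℕ → ℕ × ℕ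
  | 0 => (0, 0)
  | n + 1 =>
    if rstS a e f (rstState a e f x n).1 (rstState a e f x n).2 ≤ x
    then ((rstState a e f x n).1 + 1, (rstState a e f x n).2)
    else ((rstState a e f x n).1, (rstState a e f x n).2 + 1)

noncomputable def rstSum (a : ℕ → ℝ) (e f : ℕ → ℕ) (x : ℝ) (n : ℕ) : ℝ :=
  rstS a e f (rstState a e f x n).1 (rstState a e f x n).2

noncomputable def rstSeq (a : ℕ → ℝ) (e f : ℕ → ℕ) (x : ℝ) (n : ℕ) : ℕ :=
  if rstSum a e f x n ≤ x
  then e (rstState a e f x n).1 else f (rstState a e f x n).2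

section basic
variable (a : ℕ → ℝ) (e f : ℕ → ℕ) (x : ℝ)

lemma rstState_fst_add_snd (n : ℕ) :
    (rstState a e f x n).1 + (rstState a e f x n).2 = n := by
  induction n with
  | zero => rfl
  | succ n ih => rw [rstState]; split <;> simp <;> omega

lemma rstState_succ_of_le {n : ℕ} (h : rstSum a e f x n ≤ x) :
    rstState a e f x (n+1) = ((rstState a e f x n).1 + 1, (rstState a e f x n).2) := by
  rw [rstState] ; exact if_pos h

lemma rstState_succ_of_gt {n : ℕ} (h : ¬ rstSum a e f x n ≤ x) :
    rstState a e f x (n+1) = ((rstState a e f x n).1, (rstState a e f x n).2 + 1) := by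
  rw [rstState] ; exact if_neg h

lemma rstSum_succ (n : ℕ) :
    rstSum a e f x (n+1) = rstSum a e f x n + a (rstSeq a e f x n) := by
  by_cases h : rstSum a e f x n ≤ x
  · rw [rstSum, rstState_succ_of_le a e f x h, rstS, Finset.sum_range_succ,
      rstSeq, if_pos h, rstSum, rstS]
    ring
  · rw [rstSum, rstState_succ_of_gt a e f x h, rstS, Finset.sum_range_succ,
      rstSeq, if_neg h, rstSum, rstS]
    ring

lemma sum_rstSeq (n : ℕ) :
    ∑ k ∈ Finset.range n, a (rstSeq a e f x k) = rstSum a e f x n := by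
  induction n with
  | zero => simp [rstSum, rstS, rstState]
  | succ n ih => rw [Finset.sum_range_succ, ih, rstSum_succ]

lemma rstState_fst_mono : Monotone (fun n => (rstState a e f x n).1) := by
  apply monotone_nat_of_le_succ
  intro n
  rw [rstState]; split <;> simp

lemma rstState_snd_mono : Monotone (fun n => (rstState a e f x n).2) := by
  apply monotone_nat_of_le_succ
  intro n
  rw [rstState]; split <;> simp

lemma rstState_fst_le_succ (n : ℕ) :
    (rstState a e f x (n+1)).1 ≤ (rstState a e f x n).1 + 1 := by
  rw [rstState]; split <;> simp

lemma rstState_snd_le_succ (n : ℕ) :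
    (rstState a e f x (n+1)).2 ≤ (rstState a e f x n).2 + 1 := by
  rw [rstState]; split <;> simp

end basic

open Filter

lemma sum_nth_count (p : ℕ → Prop) [DecidablePred p] (g : ℕ → ℝ) (m : ℕ) :
    ∑ k ∈ Finset.range (Nat.count p m), g (Nat.nth p k) =
      ∑ i ∈ (Finset.range m).filter p, g i := by
  induction m with
  | zero => simp
  | succ m ih =>
    rw [Finset.range_add_one, Finset.filter_insert]
    by_cases h : p m
    · rw [if_pos h, Finset.sum_insert (by simp), Nat.count_succ, if_pos h,
        Finset.sum_range_succ, Nat.nth_count h, ih]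
      ring
    · rw [if_neg h, Nat.count_succ, if_neg h, add_zero, ih]

section counters

variable (a : ℕ → ℝ) (e f : ℕ → ℕ) (x : ℝ)

lemma sumE_mono (he : ∀ k, 0 ≤ a (e k)) :
    Monotone (fun n => ∑ k ∈ Finset.range n, a (e k)) := by
  intro b c hbc
  exact Finset.sum_le_sum_of_subset_of_nonneg (Finset.range_subset_range.2 hbc)
    (fun k _ _ => he k)

lemma sumF_anti (hf : ∀ k, a (f k) < 0) :
    Antitone (fun n => ∑ k ∈ Finset.range n, a (f k)) := by
  intro b c hbc
  show ∑ k ∈ Finset.range c, a (f k) ≤ ∑ k ∈ Finset.range b, a (f k)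
  have h : c = b + (c - b) := by omega
  rw [h, Finset.sum_range_add]
  have : ∑ k ∈ Finset.range (c - b), a (f (b + k)) ≤ 0 :=
    Finset.sum_nonpos fun k _ => (hf _).le
  linarith

lemma rstState_fst_tendsto (he : ∀ k, 0 ≤ a (e k)) (hf : ∀ k, a (f k) < 0)
    (hF : Tendsto (fun n => ∑ k ∈ Finset.range n, a (f k)) atTop atBot) :
    Tendsto (fun n => (rstState a e f x n).1) atTop atTop := by
  by_contra hcon
  have hmono := rstState_fst_mono a e f x
  have hub : ∃ K, ∀ n, (rstState a e f x n).1 < K := by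
    by_contra h
    push_neg at h
    exact hcon (hmono.tendsto_atTop_atTop (fun b => by
      obtain ⟨n, hn⟩ := h b; exact ⟨n, hn⟩))
  obtain ⟨K, hK⟩ := hub
  -- eventually no cond
  have hfin : ∃ n0, ∀ n, n0 ≤ n → ¬ rstSum a e f x n ≤ x := by
    by_contra h
    push_neg at h
    have key : ∀ c : ℕ, ∃ n, c ≤ (rstState a e f x n).1 := by
      intro c
      induction c with
      | zero => exact ⟨0, Nat.zero_le _⟩
      | succ c ih =>
        obtain ⟨n, hn⟩ := ih
        obtain ⟨m, hmn, hm⟩ := h n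
        refine ⟨m + 1, ?_⟩
        rw [rstState_succ_of_le a e f x hm]
        have := hmono hmn
        simp only at this ⊢
        omega
    obtain ⟨n, hn⟩ := key K
    exact absurd (hK n) (by omega)
  obtain ⟨n0, hn0⟩ := hfin
  -- rstSum n ≤ SE K + SF (n - K)
  have hbound : ∀ n, rstSum a e f x n ≤
      (∑ k ∈ Finset.range K, a (e k)) + ∑ k ∈ Finset.range (n - K), a (f k) := by
    intro n
    have h1 : (rstState a e f x n).1 ≤ K := (hK n).le
    have h2 : n - K ≤ (rstState a e f x n).2 := by
      have := rstState_fst_add_snd a e f x n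
      omega
    exact add_le_add (sumE_mono a e he h1) (sumF_anti a f hf h2)
  have h1 : Tendsto (fun n => ∑ k ∈ Finset.range (n - K), a (f k)) atTop atBot :=
    hF.comp (tendsto_sub_atTop_nat K)
  have h2 : ∀ᶠ n in atTop, (∑ k ∈ Finset.range (n - K), a (f k)) ≤
      x - (∑ k ∈ Finset.range K, a (e k)) - 1 :=
    h1.eventually (eventually_le_atBot _)
  obtain ⟨n, hn1, hn2⟩ := ((eventually_ge_atTop n0).and h2).exists
  have := hbound n
  exact absurd (by linarith : rstSum a e f x n ≤ x) (hn0 n hn1)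

end counters

lemma rstState_snd_tendsto (he : ∀ k, 0 ≤ a (e k)) (hf : ∀ k, a (f k) < 0)
    (hE : Tendsto (fun n => ∑ k ∈ Finset.range n, a (e k)) atTop atTop) :
    Tendsto (fun n => (rstState a e f x n).2) atTop atTop := by
  by_contra hcon
  have hmono := rstState_snd_mono a e f x
  have hub : ∃ K, ∀ n, (rstState a e f x n).2 < K := by
    by_contra h
    push_neg at h
    exact hcon (hmono.tendsto_atTop_atTop (fun b => by
      obtain ⟨n, hn⟩ := h b; exact ⟨n, hn⟩))
  obtain ⟨K, hK⟩ := hub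
  have hfin : ∃ n0, ∀ n, n0 ≤ n → rstSum a e f x n ≤ x := by
    by_contra h
    push_neg at h
    have key : ∀ c : ℕ, ∃ n, c ≤ (rstState a e f x n).2 := by
      intro c
      induction c with
      | zero => exact ⟨0, Nat.zero_le _⟩
      | succ c ih =>
        obtain ⟨n, hn⟩ := ih
        obtain ⟨m, hmn, hm⟩ := h n
        refine ⟨m + 1, ?_⟩
        rw [rstState_succ_of_gt a e f x (not_le.2 hm)]
        have := hmono hmn
        simp only at this ⊢
        omega
    obtain ⟨n, hn⟩ := key K
    exact absurd (hK n) (by omega)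
  obtain ⟨n0, hn0⟩ := hfin
  have hbound : ∀ n, (∑ k ∈ Finset.range (n - K), a (e k)) +
      ∑ k ∈ Finset.range K, a (f k) ≤ rstSum a e f x n := by
    intro n
    have h1 : (rstState a e f x n).2 ≤ K := (hK n).le
    have h2 : n - K ≤ (rstState a e f x n).1 := by
      have := rstState_fst_add_snd a e f x n
      omega
    exact add_le_add (sumE_mono a e he h2) (sumF_anti a f hf h1)
  have h1 : Tendsto (fun n => ∑ k ∈ Finset.range (n - K), a (e k)) atTop atTop :=
    hE.comp (tendsto_sub_atTop_nat K)
  have h2 : ∀ᶠ n in atTop, x - (∑ k ∈ Finset.range K, a (f k)) + 1 ≤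
      ∑ k ∈ Finset.range (n - K), a (e k) :=
    h1.eventually (eventually_ge_atTop _)
  obtain ⟨n, hn1, hn2⟩ := ((eventually_ge_atTop n0).and h2).exists
  have := hbound n
  have := hn0 n hn1
  linarith

lemma cond_frequently (hten : Tendsto (fun n => (rstState a e f x n).1) atTop atTop) :
    ∀ N, ∃ n, N ≤ n ∧ rstSum a e f x n ≤ x := by
  intro N
  by_contra h
  push_neg at h
  have hconst : ∀ n, N ≤ n → (rstState a e f x n).1 = (rstState a e f x N).1 := by
    intro n hn
    induction n, hn using Nat.le_induction with
    | base => rfl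
    | succ n hn ih =>
      rw [rstState_succ_of_gt a e f x (not_le.2 (h n hn))]
      exact ih
  obtain ⟨n, hn1, hn2⟩ := ((eventually_ge_atTop N).and
    (hten.eventually (eventually_ge_atTop ((rstState a e f x N).1 + 1)))).exists
  rw [hconst n hn1] at hn2
  omega

lemma notcond_frequently (hten : Tendsto (fun n => (rstState a e f x n).2) atTop atTop) :
    ∀ N, ∃ n, N ≤ n ∧ x < rstSum a e f x n := by
  intro N
  by_contra h
  push_neg at h
  have hconst : ∀ n, N ≤ n → (rstState a e f x n).2 = (rstState a e f x N).2 := by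
    intro n hn
    induction n, hn using Nat.le_induction with
    | base => rfl
    | succ n hn ih =>
      rw [rstState_succ_of_le a e f x (h n hn)]
      exact ih
  obtain ⟨n, hn1, hn2⟩ := ((eventually_ge_atTop N).and
    (hten.eventually (eventually_ge_atTop ((rstState a e f x N).2 + 1)))).exists
  rw [hconst n hn1] at hn2
  omega

lemma rstSeq_injective (he : ∀ k, 0 ≤ a (e k)) (hf : ∀ k, a (f k) < 0)
    (einj : Function.Injective e) (finj : Function.Injective f) :
    Function.Injective (rstSeq a e f x) := by
  have key : ∀ m n, m < n → rstSeq a e f x m ≠ rstSeq a e f x n := by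
    intro m n hmn
    unfold rstSeq
    by_cases h1 : rstSum a e f x m ≤ x <;> by_cases h2 : rstSum a e f x n ≤ x
    · rw [if_pos h1, if_pos h2]
      intro heq
      have h3 := einj heq
      have h4 : (rstState a e f x (m+1)).1 ≤ (rstState a e f x n).1 :=
        rstState_fst_mono a e f x hmn
      rw [rstState_succ_of_le a e f x h1] at h4
      simp only at h4
      omega
    · rw [if_pos h1, if_neg h2]
      intro heq
      have := he (rstState a e f x m).1
      rw [heq] at this
      exact absurd this (not_le.2 (hf _))
    · rw [if_neg h1, if_pos h2]
      intro heq
      have := he (rstState a e f x n).1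
      rw [← heq] at this
      exact absurd this (not_le.2 (hf _))
    · rw [if_neg h1, if_neg h2]
      intro heq
      have h3 := finj heq
      have h4 : (rstState a e f x (m+1)).2 ≤ (rstState a e f x n).2 :=
        rstState_snd_mono a e f x hmn
      rw [rstState_succ_of_gt a e f x h1] at h4
      simp only at h4
      omega
  intro m n heq
  by_contra hne
  rcases Nat.lt_or_ge m n with h | h
  · exact key m n h heq
  · exact key n m (by omega) heq.symm

lemma rstSeq_surjective
    (hten1 : Tendsto (fun n => (rstState a e f x n).1) atTop atTop)
    (hten2 : Tendsto (fun n => (rstState a e f x n).2) atTop atTop)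
    (hcover : ∀ m, (∃ k, e k = m) ∨ (∃ k, f k = m)) :
    Function.Surjective (rstSeq a e f x) := by
  intro m
  rcases hcover m with ⟨k, hk⟩ | ⟨k, hk⟩
  · have hex : ∃ n, k + 1 ≤ (rstState a e f x n).1 :=
      (hten1.eventually (eventually_ge_atTop (k+1))).exists
    classical
    have h1 : k + 1 ≤ (rstState a e f x (Nat.find hex)).1 := Nat.find_spec hex
    have hne : Nat.find hex ≠ 0 := by
      intro h0
      rw [h0] at h1
      simp [rstState] at h1
    obtain ⟨n', hn'⟩ : ∃ n', Nat.find hex = n' + 1 := ⟨Nat.find hex - 1, by omega⟩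
    rw [hn'] at h1
    have h2 : ¬ k + 1 ≤ (rstState a e f x n').1 := Nat.find_min hex (by omega)
    have h3 := rstState_fst_le_succ a e f x n'
    have hcond : rstSum a e f x n' ≤ x := by
      by_contra hc
      rw [rstState_succ_of_gt a e f x hc] at h1
      simp only at h1
      omega
    refine ⟨n', ?_⟩
    rw [rstSeq, if_pos hcond]
    rw [rstState_succ_of_le a e f x hcond] at h1
    simp only at h1
    have : (rstState a e f x n').1 = k := by omega
    rw [this, hk]
  · have hex : ∃ n, k + 1 ≤ (rstState a e f x n).2 :=
      (hten2.eventually (eventually_ge_atTop (k+1))).exists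
    classical
    have h1 : k + 1 ≤ (rstState a e f x (Nat.find hex)).2 := Nat.find_spec hex
    have hne : Nat.find hex ≠ 0 := by
      intro h0
      rw [h0] at h1
      simp [rstState] at h1
    obtain ⟨n', hn'⟩ : ∃ n', Nat.find hex = n' + 1 := ⟨Nat.find hex - 1, by omega⟩
    rw [hn'] at h1
    have h2 : ¬ k + 1 ≤ (rstState a e f x n').2 := Nat.find_min hex (by omega)
    have h3 := rstState_snd_le_succ a e f x n'
    have hcond : ¬ rstSum a e f x n' ≤ x := by
      intro hc
      rw [rstState_succ_of_le a e f x hc] at h1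
      simp only at h1
      omega
    refine ⟨n', ?_⟩
    rw [rstSeq, if_neg hcond]
    rw [rstState_succ_of_gt a e f x hcond] at h1
    simp only at h1
    have : (rstState a e f x n').2 = k := by omega
    rw [this, hk]

lemma rstSum_tendsto (he : ∀ k, 0 ≤ a (e k)) (hf : ∀ k, a (f k) < 0)
    (hten1 : Tendsto (fun n => (rstState a e f x n).1) atTop atTop)
    (hten2 : Tendsto (fun n => (rstState a e f x n).2) atTop atTop)
    (hb : Tendsto (fun n => a (rstSeq a e f x n)) atTop (nhds 0)) :
    Tendsto (rstSum a e f x) atTop (nhds x) := by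
  rw [Metric.tendsto_atTop]
  intro ε hε
  obtain ⟨N1, hN1⟩ := (Metric.tendsto_atTop.1 hb) ε hε
  have hN1' : ∀ n, N1 ≤ n → |a (rstSeq a e f x n)| < ε := by
    intro n hn
    have := hN1 n hn
    rwa [Real.dist_eq, sub_zero] at this
  obtain ⟨n3, hn3, hsn3⟩ := cond_frequently hten1 N1
  classical
  have hexm : ∃ m, n3 < m ∧ x < rstSum a e f x m := by
    obtain ⟨m, hm1, hm2⟩ := notcond_frequently hten2 (n3 + 1)
    exact ⟨m, by omega, hm2⟩
  set M := Nat.find hexm with hM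
  obtain ⟨hM1, hM2⟩ := Nat.find_spec hexm
  have hbelow : ∀ k, n3 ≤ k → k < M → rstSum a e f x k ≤ x := by
    intro k hk1 hk2
    rcases eq_or_lt_of_le hk1 with rfl | hlt
    · exact hsn3
    · by_contra hc
      exact absurd ⟨hlt, not_le.1 hc⟩ (Nat.find_min hexm hk2)
  have key : ∀ n, M ≤ n → x - ε < rstSum a e f x n ∧ rstSum a e f x n < x + ε := by
    intro n hn
    induction n, hn using Nat.le_induction with
    | base =>
      obtain ⟨n, hn⟩ : ∃ n, M = n + 1 := ⟨M - 1, by omega⟩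
      have hn3n : n3 ≤ n := by omega
      have hcond : rstSum a e f x n ≤ x := hbelow n hn3n (by omega)
      have hterm : |a (rstSeq a e f x n)| < ε := hN1' n (by omega)
      have hsucc := rstSum_succ a e f x n
      rw [hn]
      constructor
      · rw [← hn]; linarith
      · have : a (rstSeq a e f x n) < ε := (abs_lt.1 hterm).2
        linarith
    | succ n hn ih =>
      have hterm : |a (rstSeq a e f x n)| < ε := hN1' n (by omega)
      obtain ⟨ht1, ht2⟩ := abs_lt.1 hterm
      have hsucc := rstSum_succ a e f x n
      by_cases hcond : rstSum a e f x n ≤ x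
      · have hpos : 0 ≤ a (rstSeq a e f x n) := by
          rw [rstSeq, if_pos hcond]; exact he _
        exact ⟨by linarith [ih.1], by linarith⟩
      · have hneg : a (rstSeq a e f x n) < 0 := by
          rw [rstSeq, if_neg hcond]; exact hf _
        push_neg at hcond
        exact ⟨by linarith, by linarith [ih.2]⟩
  refine ⟨M, fun n hn => ?_⟩
  rw [Real.dist_eq, abs_lt]
  obtain ⟨h1, h2⟩ := key n hn
  constructor <;> linarith

def SeriesConvTo (a : ℕ → ℝ) (s : ℝ) : Prop :=
  Filter.Tendsto (fun n => ∑ i ∈ Finset.range n, a i) Filter.atTop (nhds s)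

/-- Riemann's second series theorem: a conditionally convergent series can be
rearranged to converge to any prescribed real number. -/
theorem rst2 (a : ℕ → ℝ)
    (hconv : ∃ s, SeriesConvTo a s)
    (hdiv : Filter.Tendsto (fun n => ∑ i ∈ Finset.range n, |a i|) Filter.atTop Filter.atTop) :
    ∀ x : ℝ, ∃ σ : Equiv.Perm ℕ, SeriesConvTo (fun n => a (σ n)) x := by
  classical
  obtain ⟨s, hs⟩ := hconv
  intro x
  rw [SeriesConvTo] at hs
  have haux : ∀ (g : ℕ → ℝ) (c : ℝ), Tendsto g atTop (nhds c) →
      Tendsto (fun m => ((∑ i ∈ Finset.range m, |a i|) + g m) / 2) atTop atTop := by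
    intro g c hg
    exact (tendsto_atTop_add_right_of_le' atTop (c - 1) hdiv
      (hg.eventually (eventually_ge_nhds (by linarith)))).atTop_div_const two_pos
  -- positive and negative parts diverge
  have hSp : Tendsto (fun m => ∑ i ∈ Finset.range m, max (a i) 0) atTop atTop := by
    have heq : (fun m => ∑ i ∈ Finset.range m, max (a i) 0) =
        fun m => ((∑ i ∈ Finset.range m, |a i|) + ∑ i ∈ Finset.range m, a i) / 2 := by
      funext m
      rw [← Finset.sum_add_distrib, Finset.sum_div]
      refine Finset.sum_congr rfl fun i _ => ?_
      rcases le_or_gt 0 (a i) with h | h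
      · rw [max_eq_left h, abs_of_nonneg h]; ring
      · rw [max_eq_right h.le, abs_of_neg h]; ring
    rw [heq]
    exact haux _ s hs
  have hSq : Tendsto (fun m => ∑ i ∈ Finset.range m, max (-(a i)) 0) atTop atTop := by
    have heq : (fun m => ∑ i ∈ Finset.range m, max (-(a i)) 0) =
        fun m => ((∑ i ∈ Finset.range m, |a i|) - ∑ i ∈ Finset.range m, a i) / 2 := by
      funext m
      rw [← Finset.sum_sub_distrib, Finset.sum_div]
      refine Finset.sum_congr rfl fun i _ => ?_
      rcases le_or_gt 0 (a i) with h | h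
      · rw [max_eq_right (neg_nonpos.2 h), abs_of_nonneg h]; ring
      · rw [max_eq_left (neg_nonneg.2 h.le), abs_of_neg h]; ring
    rw [heq]
    exact (haux _ (-s) hs.neg).congr (fun m => by ring)
  -- the sets of nonnegative and negative indices are infinite
  have hPinf : {i | 0 ≤ a i}.Infinite := by
    by_contra hfin
    rw [Set.not_infinite] at hfin
    obtain ⟨M, hM⟩ := hfin.bddAbove
    have hconst : ∀ m, M + 1 ≤ m →
        (∑ i ∈ Finset.range m, max (a i) 0) = ∑ i ∈ Finset.range (M+1), max (a i) 0 := by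
      intro m hm
      induction m, hm using Nat.le_induction with
      | base => rfl
      | succ m hm ih =>
        rw [Finset.sum_range_succ, ih]
        have : ¬ 0 ≤ a m := by
          intro h
          have := hM (Set.mem_setOf.2 h)
          omega
        rw [max_eq_right (le_of_lt (not_le.1 this)), add_zero]
    obtain ⟨m, hm1, hm2⟩ := ((eventually_ge_atTop (M+1)).and
      (hSp.eventually (eventually_ge_atTop ((∑ i ∈ Finset.range (M+1), max (a i) 0) + 1)))).exists
    rw [hconst m hm1] at hm2
    linarith
  have hNinf : {i | a i < 0}.Infinite := by
    by_contra hfin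
    rw [Set.not_infinite] at hfin
    obtain ⟨M, hM⟩ := hfin.bddAbove
    have hconst : ∀ m, M + 1 ≤ m →
        (∑ i ∈ Finset.range m, max (-(a i)) 0) = ∑ i ∈ Finset.range (M+1), max (-(a i)) 0 := by
      intro m hm
      induction m, hm using Nat.le_induction with
      | base => rfl
      | succ m hm ih =>
        rw [Finset.sum_range_succ, ih]
        have : ¬ a m < 0 := by
          intro h
          have := hM (Set.mem_setOf.2 h)
          omega
        rw [max_eq_right (neg_nonpos.2 (not_lt.1 this)), add_zero]
    obtain ⟨m, hm1, hm2⟩ := ((eventually_ge_atTop (M+1)).and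
      (hSq.eventually (eventually_ge_atTop ((∑ i ∈ Finset.range (M+1), max (-(a i)) 0) + 1)))).exists
    rw [hconst m hm1] at hm2
    linarith
  have hPinf' : (setOf (fun i => 0 ≤ a i)).Infinite := hPinf
  have hNinf' : (setOf (fun i => a i < 0)).Infinite := hNinf
  set e := Nat.nth (fun i => 0 ≤ a i) with he_def
  set f := Nat.nth (fun i => a i < 0) with hf_def
  have he : ∀ k, 0 ≤ a (e k) := fun k => Nat.nth_mem_of_infinite hPinf' k
  have hf : ∀ k, a (f k) < 0 := fun k => Nat.nth_mem_of_infinite hNinf' k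
  have einj : Function.Injective e := Nat.nth_injective hPinf'
  have finj : Function.Injective f := Nat.nth_injective hNinf'
  have hcover : ∀ m, (∃ k, e k = m) ∨ (∃ k, f k = m) := by
    intro m
    rcases le_or_gt 0 (a m) with h | h
    · exact Or.inl (Nat.subset_range_nth (Set.mem_setOf.2 h))
    · exact Or.inr (Nat.subset_range_nth (Set.mem_setOf.2 h))
  have hE : Tendsto (fun n => ∑ k ∈ Finset.range n, a (e k)) atTop atTop := by
    refine (sumE_mono a e he).tendsto_atTop_atTop fun b => ?_
    obtain ⟨m, hm⟩ := (hSp.eventually (eventually_ge_atTop b)).exists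
    refine ⟨Nat.count (fun i => 0 ≤ a i) m, ?_⟩
    rw [he_def, sum_nth_count (fun i => 0 ≤ a i) a m]
    have heq : ∑ i ∈ (Finset.range m).filter (fun i => 0 ≤ a i), a i
        = ∑ i ∈ Finset.range m, max (a i) 0 := by
      rw [Finset.sum_filter]
      refine Finset.sum_congr rfl fun i _ => ?_
      by_cases h : 0 ≤ a i
      · rw [if_pos h, max_eq_left h]
      · rw [if_neg h, max_eq_right (le_of_lt (not_le.1 h))]
    rw [heq]
    exact hm
  have hF : Tendsto (fun n => ∑ k ∈ Finset.range n, a (f k)) atTop atBot := by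
    rw [← tendsto_neg_atTop_iff]
    have hmono : Monotone (fun n => -∑ k ∈ Finset.range n, a (f k)) :=
      fun b c hbc => neg_le_neg (sumF_anti a f hf hbc)
    refine hmono.tendsto_atTop_atTop fun b => ?_
    obtain ⟨m, hm⟩ := (hSq.eventually (eventually_ge_atTop b)).exists
    refine ⟨Nat.count (fun i => a i < 0) m, ?_⟩
    have heq2 : -∑ k ∈ Finset.range (Nat.count (fun i => a i < 0) m), a (f k)
        = ∑ i ∈ Finset.range m, max (-(a i)) 0 := by
      rw [← Finset.sum_neg_distrib, hf_def,
        sum_nth_count (fun i => a i < 0) (fun i => -(a i)) m, Finset.sum_filter]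
      refine Finset.sum_congr rfl fun i _ => ?_
      by_cases h : a i < 0
      · rw [if_pos h, max_eq_left (neg_nonneg.2 h.le)]
      · rw [if_neg h, max_eq_right (neg_nonpos.2 (not_lt.1 h))]
    show b ≤ -∑ k ∈ Finset.range (Nat.count (fun i => a i < 0) m), a (f k)
    rw [heq2]
    exact hm
  have hten1 := rstState_fst_tendsto a e f x he hf hF
  have hten2 := rstState_snd_tendsto (x := x) he hf hE
  have hinj := rstSeq_injective (x := x) he hf einj finj
  have hsurj := rstSeq_surjective (x := x) hten1 hten2 hcover
  have ha0 : Tendsto a atTop (nhds 0) := by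
    have h1 : Tendsto (fun n => (∑ i ∈ Finset.range (n+1), a i)
        - ∑ i ∈ Finset.range n, a i) atTop (nhds (s - s)) :=
      (hs.comp (tendsto_add_atTop_nat 1)).sub hs
    rw [sub_self] at h1
    refine h1.congr fun n => ?_
    rw [Finset.sum_range_succ]
    ring
  have hb : Tendsto (fun n => a (rstSeq a e f x n)) atTop (nhds 0) := by
    have hsig : Tendsto (rstSeq a e f x) atTop atTop := by
      rw [← Nat.cofinite_eq_atTop]
      exact hinj.tendsto_cofinite
    exact ha0.comp hsig
  refine ⟨Equiv.ofBijective _ ⟨hinj, hsurj⟩, ?_⟩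
  rw [SeriesConvTo]
  exact (rstSum_tendsto (x := x) he hf hten1 hten2 hb).congr
    fun n => (sum_rstSeq a e f x n).symm
end

section
/- If a series ∑ aₙ of real numbers is conditionally convergent, then there exists a permutation τ of the positive integers such that the partial sums of ∑ a_{τ(n)} diverge to +∞. -/
/-!
The nonnegative and the negative terms of `a` form series diverging to `+∞` and to `-∞`,
since their partial sums are `(∑ |aᵢ| ± ∑ aᵢ) / 2`. Keep both kinds of terms in their
original order, but let the `(k+1)`-st negative term appear only after so many nonnegative
terms that their sum exceeds `k + 1` plus the size of the first `k + 1` negative terms.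
Every partial sum that contains exactly `k + 1` negative terms is then at least `k + 1`.
-/

open Filter Finset

namespace Nat

theorem count_add_count_not (p : ℕ → Prop) [DecidablePred p] (n : ℕ) :
    count p n + count (¬p ·) n = n := by
  induction n with
  | zero => simp
  | succ n ih => by_cases h : p n <;> simp [count_succ, h] <;> omega

noncomputable def countEquivSum (p : ℕ → Prop) [DecidablePred p] (hp : {i | p i}.Infinite)
    (hnp : {i | ¬p i}.Infinite) : ℕ ≃ ℕ ⊕ ℕ where
  toFun i := if p i then .inl (count p i) else .inr (count (¬p ·) i)
  invFun := Sum.elim (nth p) (nth (¬p ·))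
  left_inv i := by by_cases h : p i <;> simp [h, nth_count]
  right_inv := by
    rintro (k | k)
    · simp [nth_mem_of_infinite hp, count_nth_of_infinite hp]
    · simp [nth_mem_of_infinite hnp k, count_nth_of_infinite hnp]

variable {p : ℕ → Prop}

theorem nth_range_eq_of_strictMono {f : ℕ → ℕ} (hf : StrictMono f) :
    nth (· ∈ Set.range f) = f := by
  funext n
  have hinf : (Set.range f).Infinite := Set.infinite_range_of_injective hf.injective
  simpa using (nth_comp_of_strictMono (p := (· ∈ Set.range f)) hf (fun _ hk => hk)
    (fun hfin => absurd hfin hinf) (n := n)).symm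

theorem monotone_sum_range_nth {M : Type*} [AddCommMonoid M] [PartialOrder M]
    [IsOrderedAddMonoid M] {f : ℕ → M} (hp : {i | p i}.Infinite)
    (hf : ∀ i, p i → 0 ≤ f i) :
    Monotone fun k => ∑ j ∈ range k, f (nth p j) :=
  monotone_nat_of_le_succ fun k => by
    rw [sum_range_succ]
    exact le_add_of_nonneg_right (hf _ (nth_mem_of_infinite hp k))

theorem count_range_apply_of_strictMono {f : ℕ → ℕ} (hf : StrictMono f)
    [DecidablePred (· ∈ Set.range f)] (k : ℕ) : count (· ∈ Set.range f) (f k) = k := by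
  have := count_nth_of_infinite (p := (· ∈ Set.range f))
    (Set.infinite_range_of_injective hf.injective) k
  rwa [nth_range_eq_of_strictMono hf] at this

theorem infinite_setOf_notMem_range_add_self {ψ : ℕ → ℕ} (hψ : StrictMono ψ) :
    {i | i ∉ Set.range fun k => ψ k + k}.Infinite := fun hfin => by
  classical
  set b : ℕ → ℕ := fun k => ψ k + k
  have hcount_not (k : ℕ) : count (· ∉ Set.range b) (b k) = ψ k := by
    have := count_add_count_not (· ∈ Set.range b) (b k)
    rw [count_range_apply_of_strictMono (hψ.add strictMono_id : StrictMono b)] at this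
    have hbk : b k = ψ k + k := rfl
    omega
  set N := #hfin.toFinset
  have hle := count_le_card hfin (b (N + 1))
  rw [hcount_not] at hle
  have := hψ.le_apply (x := N + 1)
  omega

variable [DecidablePred p]

theorem sum_range_count_nth {M : Type*} [AddCommMonoid M] (f : ℕ → M) (n : ℕ) :
    ∑ j ∈ range (count p n), f (nth p j) = ∑ i ∈ range n with p i, f i := by
  rw [sum_filter]
  induction n with
  | zero => simp
  | succ n ih => by_cases h : p n <;> simp [count_succ, sum_range_succ, h, nth_count, ih]

theorem sum_range_countEquivSum {M : Type*} [AddCommMonoid M] (hp : {i | p i}.Infinite)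
    (hnp : {i | ¬p i}.Infinite) (g : ℕ ⊕ ℕ → M) (n : ℕ) :
    ∑ i ∈ range n, g (countEquivSum p hp hnp i) =
      ∑ j ∈ range (count p n), g (.inl j) + ∑ j ∈ range (count (¬p ·) n), g (.inr j) := by
  induction n with
  | zero => simp
  | succ n ih =>
    rw [sum_range_succ, ih]
    by_cases h : p n <;> simp [countEquivSum, count_succ, h, sum_range_succ] <;> abel

theorem tendsto_sum_range_nth_atTop {M : Type*} [AddCommMonoid M] [PartialOrder M]
    [IsOrderedAddMonoid M] {f : ℕ → M} (hp : {i | p i}.Infinite) (hf : ∀ i, p i → 0 ≤ f i)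
    (h : Tendsto (fun n => ∑ i ∈ range n with p i, f i) atTop atTop) :
    Tendsto (fun k => ∑ j ∈ range k, f (nth p j)) atTop atTop := by
  have hcomp : (fun k => ∑ j ∈ range k, f (nth p j)) ∘ count p =
      fun n => ∑ i ∈ range n with p i, f i := funext fun n => sum_range_count_nth f n
  exact tendsto_atTop_of_monotone_of_subseq (monotone_sum_range_nth hp hf) (hcomp ▸ h)

end Nat

open Nat

theorem infinite_support_of_tendsto_sum_range_atTop {M : Type*} [AddCommMonoid M]
    [TopologicalSpace M] [Preorder M] [NoTopOrder M] [ClosedIciTopology M] {f : ℕ → M}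
    (hf : Tendsto (fun n => ∑ i ∈ range n, f i) atTop atTop) : (Function.support f).Infinite :=
  fun hfin => not_tendsto_atTop_of_tendsto_nhds
    (summable_of_hasFiniteSupport hfin).tendsto_sum_tsum_nat hf

section PosNegPart

variable {a : ℕ → ℝ} {s : ℝ}

theorem tendsto_sum_range_posPart_atTop
    (hs : Tendsto (fun n => ∑ i ∈ range n, a i) atTop (nhds s))
    (habs : Tendsto (fun n => ∑ i ∈ range n, |a i|) atTop atTop) :
    Tendsto (fun n => ∑ i ∈ range n, (a i)⁺) atTop atTop := by
  have key (n : ℕ) :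
      ∑ i ∈ range n, (a i)⁺ = (∑ i ∈ range n, |a i| + ∑ i ∈ range n, a i) / 2 := by
    rw [← sum_add_distrib, sum_div]
    exact sum_congr rfl fun i _ => by
      linarith [posPart_add_negPart (a i), posPart_sub_negPart (a i)]
  simpa only [key] using (habs.atTop_add hs).atTop_div_const two_pos

theorem tendsto_sum_range_negPart_atTop
    (hs : Tendsto (fun n => ∑ i ∈ range n, a i) atTop (nhds s))
    (habs : Tendsto (fun n => ∑ i ∈ range n, |a i|) atTop atTop) :
    Tendsto (fun n => ∑ i ∈ range n, (a i)⁻) atTop atTop := by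
  have key (n : ℕ) :
      ∑ i ∈ range n, (a i)⁻ = (∑ i ∈ range n, |a i| + -∑ i ∈ range n, a i) / 2 := by
    rw [← sum_neg_distrib, ← sum_add_distrib, sum_div]
    exact sum_congr rfl fun i _ => by
      linarith [posPart_add_negPart (a i), posPart_sub_negPart (a i)]
  simpa only [key] using (habs.atTop_add hs.neg).atTop_div_const two_pos

end PosNegPart

open Classical in
theorem exists_interleaving_tendsto_atTop {A B : ℕ → ℝ} (hA : Monotone A)
    (hA_top : Tendsto A atTop atTop) :
    ∃ p : ℕ → Prop, {i | p i}.Infinite ∧ {i | ¬p i}.Infinite ∧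
      Tendsto (fun n => B (count p n) + A (count (¬p ·) n)) atTop atTop := by
  obtain ⟨ψ, hψ, hψA⟩ := extraction_forall_of_eventually
    (P := fun k j => (k + 1 : ℝ) - B (k + 1) ≤ A j) fun k => hA_top.eventually_ge_atTop _
  -- The `k`-th point of `p` is `ψ k + k`, so exactly `ψ k` points outside `p` precede it.
  set b : ℕ → ℕ := fun k => ψ k + k
  have hb : StrictMono b := hψ.add strictMono_id
  set p : ℕ → Prop := (· ∈ Set.range b)
  have hnth : nth p = b := nth_range_eq_of_strictMono hb
  have hp : {i | p i}.Infinite := Set.infinite_range_of_injective hb.injective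
  have hnp : {i | ¬p i}.Infinite := infinite_setOf_notMem_range_add_self hψ
  have hbound (n : ℕ) (hn : 0 < count p n) :
      (count p n : ℝ) ≤ B (count p n) + A (count (¬p ·) n) := by
    obtain ⟨k, hk⟩ : ∃ k, count p n = k + 1 := ⟨count p n - 1, by omega⟩
    have hbk : b k < n := hnth ▸ nth_lt_of_lt_count (by omega)
    have hψk : ψ k ≤ count (¬p ·) n := by
      have := count_add_count_not p n
      simp only [b] at hbk
      omega
    rw [hk]
    push_cast
    linarith [hψA k, hA hψk]
  have hcount_top : Tendsto (count p) atTop atTop :=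
    tendsto_atTop_atTop_of_monotone (count_monotone p) fun k =>
      ⟨b k, (count_range_apply_of_strictMono hb k).ge⟩
  exact ⟨p, hp, hnp, tendsto_atTop_mono' _ ((hcount_top.eventually_ge_atTop 1).mono hbound)
    (tendsto_natCast_atTop_atTop.comp hcount_top)⟩

/-- A conditionally convergent series has a rearrangement whose partial sums
diverge to +∞. -/
theorem rst2_extended (a : ℕ → ℝ)
    (hconv : ∃ s, SeriesConvTo a s)
    (hdiv : Filter.Tendsto (fun n => ∑ i ∈ Finset.range n, |a i|) Filter.atTop Filter.atTop) :
    ∃ τ : Equiv.Perm ℕ,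
      Filter.Tendsto (fun n => ∑ i ∈ Finset.range n, a (τ i)) Filter.atTop Filter.atTop := by
  classical
  obtain ⟨s, hs⟩ := hconv
  set q : ℕ → Prop := (a · < 0)
  have hq : {i | q i}.Infinite :=
    (infinite_support_of_tendsto_sum_range_atTop (tendsto_sum_range_negPart_atTop hs hdiv)).mono
      fun i hi => by simpa [q] using hi
  have hnq : {i | ¬q i}.Infinite :=
    (infinite_support_of_tendsto_sum_range_atTop (tendsto_sum_range_posPart_atTop hs hdiv)).mono
      fun i hi => not_lt.mpr (by simpa using hi : 0 < a i).le
  have hnq_nonneg (i : ℕ) (hi : ¬q i) : 0 ≤ a i := not_lt.mp hi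
  have hA_top := tendsto_sum_range_nth_atTop hnq hnq_nonneg
    (by simpa [sum_filter, posPart_eq_ite, q] using tendsto_sum_range_posPart_atTop hs hdiv)
  obtain ⟨p, hp, hnp, hpAB⟩ := exists_interleaving_tendsto_atTop
    (monotone_sum_range_nth hnq hnq_nonneg) hA_top (B := fun k => ∑ j ∈ range k, a (nth q j))
  -- `τ` lists the negative terms at the points of `p` and the others elsewhere, both in order.
  refine ⟨(countEquivSum p hp hnp).trans (countEquivSum q hq hnq).symm, ?_⟩
  convert hpAB using 2 with n
  exact sum_range_countEquivSum hp hnp (fun x => a ((countEquivSum q hq hnq).symm x)) n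
end

section
/- Let ∑ aₙ be a weak-permutably convergent series of real numbers. Then for every permutation σ of the positive integers, it is impossible that ∑ |a_{σ(n)}| diverges to infinity; hence (classically) ∑ |aₙ| converges. -/
def BracketConvTo (c : ℕ → ℝ) (f : ℕ → ℕ) (t : ℝ) : Prop :=
  StrictMono f ∧ f 0 = 0 ∧
    Filter.Tendsto (fun K => ∑ i ∈ Finset.range (f K), c i) Filter.atTop (nhds t)

/-- A series is weak-permutably convergent if it converges and every rearrangement
admits a convergent bracketing. -/
def WeakPermConv (a : ℕ → ℝ) : Prop :=
  (∃ s, SeriesConvTo a s) ∧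
    ∀ σ : Equiv.Perm ℕ, ∃ f : ℕ → ℕ, ∃ t : ℝ, BracketConvTo (fun n => a (σ n)) f t

/-! If `∑ aₙ` converges but `∑ |aₙ|` does not, then neither the positive nor the negative parts
are summable, and infinitely many terms are negative. Interleave the terms: list the nonnegative
ones in order, and insert the `k`-th negative one only after enough nonnegative terms to outweigh
the first `k + 1` negative terms by `k + 1`. The partial sums of this rearrangement are bounded
below by the number of negative terms used so far, hence tend to `+∞`, and so does every
bracketing of it, contradicting weak-permutable convergence. -/

open Filter Finset Function

namespace Nat

variable {M : ℕ → Prop} [DecidablePred M] {α : Type*}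

def merge (M : ℕ → Prop) [DecidablePred M] (f g : ℕ → α) (n : ℕ) : α :=
  if M n then f (count M n) else g (count (fun i => ¬M i) n)

theorem sum_range_merge {β : Type*} [AddCommMonoid β] (f g : ℕ → α) (u : α → β) (n : ℕ) :
    ∑ i ∈ range n, u (merge M f g i) =
      ∑ j ∈ range (count M n), u (f j) + ∑ j ∈ range (count (fun i => ¬M i) n), u (g j) := by
  induction n with
  | zero => simp
  | succ n ih =>
    rw [sum_range_succ, ih]
    by_cases hn : M n <;>
      simp only [merge, count_succ, hn, if_true, if_false, not_true_eq_false, not_false_eq_true,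
        add_zero, sum_range_succ] <;> abel

theorem bijective_merge (hM : {n | M n}.Infinite) (hM' : {n | ¬M n}.Infinite)
    {f g : ℕ → α} (hf : Injective f) (hg : Injective g)
    (hfg : IsCompl (Set.range f) (Set.range g)) : Bijective (merge M f g) := by
  constructor
  · intro x y hxy
    unfold merge at hxy
    split_ifs at hxy with hx hy hy
    · exact count_injective hx hy (hf hxy)
    · exact (hfg.disjoint.ne_of_mem ⟨_, rfl⟩ ⟨_, rfl⟩ hxy).elim
    · exact (hfg.disjoint.ne_of_mem ⟨_, rfl⟩ ⟨_, rfl⟩ hxy.symm).elim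
    · exact count_injective hx hy (hg hxy)
  · intro y
    have hy : y ∈ Set.range f ∪ Set.range g := by
      simp [← Set.sup_eq_union, hfg.sup_eq_top]
    rcases hy with ⟨k, rfl⟩ | ⟨k, rfl⟩
    · exact ⟨nth M k, by simp [merge, nth_mem_of_infinite hM, count_nth_of_infinite hM]⟩
    · exact ⟨nth (fun i => ¬M i) k,
        by simp [merge, nth_mem_of_infinite hM', count_nth_of_infinite hM']⟩

theorem count_add_count_not_s6 (n : ℕ) : count M n + count (fun i => ¬M i) n = n := by
  induction n with
  | zero => simp
  | succ n ih => by_cases hn : M n <;> simp [count_succ, hn] <;> omega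

theorem nth_eq_of_strictMono {m : ℕ → ℕ} (hm : StrictMono m) : nth (· ∈ Set.range m) = m := by
  have hinf : (Set.range m).Infinite := Set.infinite_range_of_injective hm.injective
  funext k
  refine (eq_nth_of_strictMonoOn_of_mapsTo_of_surjOn m ?_ ?_ (hm.strictMonoOn _) ?_).symm
  · rintro _ ⟨j, rfl⟩
    exact ⟨j, fun hf => (hinf hf).elim, rfl⟩
  · exact fun j _ => ⟨j, rfl⟩
  · exact fun hf => (hinf hf).elim

end Nat

open Nat

theorem StrictMono.infinite_compl_range_add_id {r : ℕ → ℕ} (hr : StrictMono r) :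
    (Set.range fun k => r k + k)ᶜ.Infinite := by
  have hm : StrictMono fun k => r k + k := hr.add strictMono_id
  have hgap k : r k + k + 1 < r (k + 1) + (k + 1) := by have := hr (lt_add_one k); omega
  refine Set.infinite_of_injective_forall_mem (f := fun k => r k + k + 1)
    (fun i j hij => hm.injective (by simpa using hij)) ?_
  rintro k ⟨j, hj⟩
  have h₁ : k < j := hm.lt_iff_lt.1 (by simp only at hj; omega)
  have h₂ : j < k + 1 := hm.lt_iff_lt.1 (by have := hgap k; simp only at hj ⊢; omega)
  omega

section Real

variable {a : ℕ → ℝ}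

theorem SeriesConvTo.summable_negPart_iff {s : ℝ} (ha : SeriesConvTo a s) :
    Summable a⁻ ↔ Summable a⁺ := by
  have summable_of_tendsto {f : ℕ → ℝ} (hf : 0 ≤ f) {l : ℝ}
      (h : Tendsto (fun n => ∑ i ∈ range n, f i) atTop (nhds l)) : Summable f :=
    ((hasSum_iff_tendsto_nat_of_nonneg hf l).2 h).summable
  constructor
  · intro h
    refine summable_of_tendsto (posPart_nonneg a)
      ((h.hasSum.tendsto_sum_nat.add ha).congr fun n => ?_)
    rw [← sum_add_distrib]
    refine sum_congr rfl fun i _ => ?_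
    linarith [posPart_sub_negPart (a i), Pi.posPart_apply a i, Pi.negPart_apply a i]
  · intro h
    refine summable_of_tendsto (negPart_nonneg a)
      ((h.hasSum.tendsto_sum_nat.sub ha).congr fun n => ?_)
    rw [← sum_sub_distrib]
    refine sum_congr rfl fun i _ => ?_
    linarith [posPart_sub_negPart (a i), Pi.posPart_apply a i, Pi.negPart_apply a i]

theorem SeriesConvTo.summable_abs_iff {s : ℝ} (ha : SeriesConvTo a s) :
    Summable |a| ↔ Summable a⁺ :=
  ⟨fun h => h.of_nonneg_of_le (posPart_nonneg a) fun _ => max_le (le_abs_self _) (abs_nonneg _),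
    fun h => posPart_add_negPart a ▸ h.add (ha.summable_negPart_iff.2 h)⟩

theorem infinite_setOf_nonneg_of_not_summable_posPart (hpos : ¬Summable a⁺) :
    {n | 0 ≤ a n}.Infinite := by
  refine fun hfin => hpos (summable_of_hasFiniteSupport (hfin.subset fun n hn => ?_))
  by_contra h
  exact hn (posPart_eq_zero.2 (not_le.1 h).le)

theorem infinite_setOf_neg_of_not_summable_negPart (hneg : ¬Summable a⁻) :
    {n | a n < 0}.Infinite := by
  refine fun hfin => hneg (summable_of_hasFiniteSupport (hfin.subset fun n hn => ?_))
  by_contra h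
  exact hn (negPart_eq_zero.2 (not_lt.1 h))

theorem tendsto_sum_nth_nonneg_atTop (hpos : ¬Summable a⁺) :
    Tendsto (fun r => ∑ j ∈ range r, a (nth (fun n => 0 ≤ a n) j)) atTop atTop := by
  have hP := infinite_setOf_nonneg_of_not_summable_posPart hpos
  refine (not_summable_iff_tendsto_nat_atTop_of_nonneg fun j => nth_mem_of_infinite hP j).1 ?_
  have hzero : ∀ n ∉ Set.range (nth fun n => 0 ≤ a n), a⁺ n = 0 := by
    intro n hn
    rw [range_nth_of_infinite hP] at hn
    exact posPart_eq_zero.2 (not_le.1 hn).le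
  have hcomp : (fun j => a (nth (fun n => 0 ≤ a n) j)) = a⁺ ∘ nth fun n => 0 ≤ a n :=
    funext fun j => (posPart_eq_self.2 (nth_mem_of_infinite hP j)).symm
  rwa [hcomp, (nth_injective hP).summable_iff hzero]

theorem exists_perm_tendsto_sum_range_atTop (hpos : ¬Summable a⁺)
    (hneg : {n | a n < 0}.Infinite) :
    ∃ σ : Equiv.Perm ℕ, Tendsto (fun n => ∑ i ∈ range n, a (σ i)) atTop atTop := by
  classical
  set P : ℕ → Prop := fun n => 0 ≤ a n
  have hP : {n | P n}.Infinite := infinite_setOf_nonneg_of_not_summable_posPart hpos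
  have hP' : {n | ¬P n}.Infinite := by simpa [P] using hneg
  set F : ℕ → ℝ := fun r => ∑ j ∈ range r, a (nth P j)
  set G : ℕ → ℝ := fun k => ∑ j ∈ range k, a (nth (fun n => ¬P n) j)
  have hF_mono : Monotone F :=
    monotone_nat_of_le_succ fun r => by simpa [F, sum_range_succ] using nth_mem_of_infinite hP r
  -- The `k`-th negative term goes to position `r k + k`, after at least `r k` nonnegative terms.
  obtain ⟨r, hr, hrF⟩ := extraction_forall_of_eventually fun k =>
    (tendsto_sum_nth_nonneg_atTop hpos).eventually_ge_atTop (k + 1 - G (k + 1))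
  set m : ℕ → ℕ := fun k => r k + k
  have hm : StrictMono m := hr.add strictMono_id
  set M : ℕ → Prop := (· ∈ Set.range m)
  have hM : {n | M n}.Infinite := Set.infinite_range_of_injective hm.injective
  have hPcompl : IsCompl (Set.range (nth fun n => ¬P n)) (Set.range (nth P)) := by
    rw [range_nth_of_infinite hP, range_nth_of_infinite hP']
    exact isCompl_compl.symm
  let σ := Equiv.ofBijective _ (bijective_merge hM hr.infinite_compl_range_add_id
    (nth_injective hP') (nth_injective hP) hPcompl)
  refine ⟨σ, ?_⟩
  have hlow n : (count M n : ℝ) ≤ ∑ i ∈ range n, a (σ i) := by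
    rw [show ∑ i ∈ range n, a (σ i) = G (count M n) + F (count (fun i => ¬M i) n) from
      sum_range_merge _ _ a n]
    rcases hk : count M n with _ | j
    · simpa [G, show F 0 = 0 from sum_range_zero _] using hF_mono (zero_le _)
    · have hmj : m j < n := nth_eq_of_strictMono hm ▸ nth_lt_of_lt_count (hk ▸ lt_add_one j)
      have hrj : r j ≤ count (fun i => ¬M i) n := by
        have := count_add_count_not_s6 (M := M) n
        have : m j = r j + j := rfl
        omega
      have := hrF j
      have := hF_mono hrj
      push_cast
      linarith
  have hcount : Tendsto (count M) atTop atTop :=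
    tendsto_atTop_atTop_of_monotone (count_monotone M) fun k =>
      ⟨nth M k, (count_nth_of_infinite hM k).ge⟩
  exact tendsto_atTop_mono hlow (tendsto_natCast_atTop_atTop.comp hcount)

end Real

theorem BracketConvTo.not_tendsto_atTop {c : ℕ → ℝ} {f : ℕ → ℕ} {t : ℝ}
    (h : BracketConvTo c f t) : ¬Tendsto (fun n => ∑ i ∈ range n, c i) atTop atTop :=
  fun hdiv => not_tendsto_atTop_of_tendsto_nhds h.2.2 (hdiv.comp h.1.tendsto_atTop)

theorem WeakPermConv.summable_abs {a : ℕ → ℝ} (h : WeakPermConv a) : Summable |a| := by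
  obtain ⟨⟨s, hs⟩, hbracket⟩ := h
  by_contra habs
  have hpos : ¬Summable a⁺ := hs.summable_abs_iff.not.1 habs
  have hneg : ¬Summable a⁻ := hs.summable_negPart_iff.not.2 hpos
  obtain ⟨σ, hσ⟩ :=
    exists_perm_tendsto_sum_range_atTop hpos (infinite_setOf_neg_of_not_summable_negPart hneg)
  obtain ⟨f, t, hf⟩ := hbracket σ
  exact hf.not_tendsto_atTop hσ

/-- Lemma 2.5: for a weak-permutably convergent series, no rearranged series of absolute
values diverges to infinity; hence (classically) `∑ |a n|` converges. -/
theorem lemma25 (a : ℕ → ℝ) (h : WeakPermConv a) :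
    (∀ σ : Equiv.Perm ℕ,
      ¬Filter.Tendsto (fun n => ∑ i ∈ Finset.range n, |a (σ i)|) Filter.atTop Filter.atTop) ∧
    ∃ l, SeriesConvTo (fun n => |a n|) l := by
  have habs : Summable fun n => |a n| := h.summable_abs
  refine ⟨fun σ => ?_, _, habs.hasSum.tendsto_sum_nat⟩
  exact not_tendsto_atTop_of_tendsto_nhds (habs.comp_injective σ.injective).hasSum.tendsto_sum_nat
end

section
/- Let (λ_k) be a binary sequence (each λ_k ∈ {0,1}), and define aₙ = λ_k/(n+1) whenever 2^k + 1 ≤ n + 1 < 2^{k+1} (k ≥ 1), with aₙ = 0 otherwise. Then the series ∑ (−1)ⁿ aₙ converges in ℝ. -/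
open Filter Topology Finset

theorem Filter.Tendsto.of_comp_two_mul_of_comp_two_mul_add_one {α : Type*} {u : ℕ → α}
    {l : Filter α} (he : Tendsto (fun j => u (2 * j)) atTop l)
    (ho : Tendsto (fun j => u (2 * j + 1)) atTop l) : Tendsto u atTop l := by
  intro s hs
  obtain ⟨N, hN⟩ := eventually_atTop.1 ((he.eventually_mem hs).and (ho.eventually_mem hs))
  refine eventually_atTop.2 ⟨2 * N, fun n hn => ?_⟩
  obtain ⟨j, rfl | rfl⟩ := Nat.even_or_odd' n
  · exact (hN j (by omega)).1
  · exact (hN j (by omega)).2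

theorem Finset.sum_range_two_mul {M : Type*} [AddCommMonoid M] (f : ℕ → M) (n : ℕ) :
    ∑ i ∈ range (2 * n), f i = ∑ j ∈ range n, (f (2 * j) + f (2 * j + 1)) := by
  induction n with
  | zero => simp
  | succ n ih => rw [Nat.mul_succ, sum_range_succ, sum_range_succ, sum_range_succ, ih, add_assoc]

theorem tendsto_sum_range_of_hasSum_pairs {M : Type*} [AddCommMonoid M] [TopologicalSpace M]
    [ContinuousAdd M] {f : ℕ → M} {t : M} (hf : Tendsto f atTop (𝓝 0))
    (h : HasSum (fun j => f (2 * j) + f (2 * j + 1)) t) :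
    Tendsto (fun n => ∑ i ∈ range n, f i) atTop (𝓝 t) := by
  have heven : Tendsto (fun j => ∑ i ∈ range (2 * j), f i) atTop (𝓝 t) := by
    simpa only [sum_range_two_mul] using h.tendsto_sum_nat
  have hodd := heven.add (hf.comp (tendsto_id.const_mul_atTop' two_pos))
  rw [add_zero] at hodd
  exact heven.of_comp_two_mul_of_comp_two_mul_add_one
    (by simpa only [sum_range_succ, Function.comp_apply, id] using hodd)

def predTwoPow : Set ℕ := {j | ∃ k, j + 1 = 2 ^ k}

theorem summable_indicator_predTwoPow_inv_succ :
    Summable (predTwoPow.indicator fun j => ((j : ℝ) + 1)⁻¹) := by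
  have hpred : ∀ k : ℕ, 2 ^ k - 1 + 1 = 2 ^ k := fun k => Nat.sub_add_cancel Nat.one_le_two_pow
  have hinj : Function.Injective fun k : ℕ => 2 ^ k - 1 := fun x y hxy =>
    Nat.pow_right_injective le_rfl (by simp only at hxy ⊢; rw [← hpred x, ← hpred y, hxy])
  refine (hinj.summable_iff fun j hj => Set.indicator_of_notMem ?_ _).1 ?_
  · rintro ⟨k, hk⟩
    exact hj ⟨k, by simp only [← hk, Nat.add_sub_cancel]⟩
  · refine summable_geometric_two.congr fun k => ?_
    have hmem : 2 ^ k - 1 ∈ predTwoPow := ⟨k, hpred k⟩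
    rw [Function.comp_apply, Set.indicator_of_mem hmem, ← Nat.cast_add_one, hpred k]
    simp

theorem summable_inv_nat_succ_sq : Summable fun j : ℕ => (((j : ℝ) + 1) ^ 2)⁻¹ := by
  simpa using (summable_nat_add_iff 1).2 (Real.summable_nat_pow_inv.2 one_lt_two)

theorem inv_sub_inv_two_mul_succ_le (j : ℕ) :
    ((2 * j + 1 : ℝ))⁻¹ - (2 * j + 2 : ℝ)⁻¹ ≤ (((j : ℝ) + 1) ^ 2)⁻¹ := by
  have : ((2 * j + 1 : ℝ))⁻¹ - (2 * j + 2 : ℝ)⁻¹ = ((2 * j + 1) * (2 * j + 2) : ℝ)⁻¹ := by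
    field_simp; ring
  rw [this]
  gcongr
  nlinarith

theorem exists_dyadic_block_of_notMem_predTwoPow {j : ℕ} (hj : j ∉ predTwoPow) :
    ∃ k, 1 ≤ k ∧ 2 ^ k + 1 ≤ 2 * j + 1 ∧ 2 * j + 2 < 2 ^ (k + 1) := by
  have hlow : 2 ^ Nat.log 2 (j + 1) < j + 1 :=
    (Nat.pow_log_le_self 2 j.succ_ne_zero).lt_of_ne fun h => hj ⟨_, h.symm⟩
  have hhigh : j + 1 < 2 ^ (Nat.log 2 (j + 1) + 1) := Nat.lt_pow_succ_log_self one_lt_two _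
  refine ⟨Nat.log 2 (j + 1) + 1, le_add_self, ?_, ?_⟩ <;> rw [pow_succ] at * <;> omega

theorem two_pow_notMem_dyadic_block (k k' : ℕ) :
    ¬(2 ^ k' + 1 ≤ 2 ^ k ∧ 2 ^ k < 2 ^ (k' + 1)) := by
  rintro ⟨hlow, hhigh⟩
  have := (Nat.pow_lt_pow_iff_right one_lt_two).1 (Nat.lt_of_succ_le hlow)
  have := (Nat.pow_lt_pow_iff_right one_lt_two).1 hhigh
  omega

section DyadicBlocks

variable {lam : ℕ → ℕ} {a : ℕ → ℝ}
  (hbin : ∀ k, lam k = 0 ∨ lam k = 1)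
  (hblock : ∀ k n, 1 ≤ k → 2 ^ k + 1 ≤ n + 1 → n + 1 < 2 ^ (k + 1) →
    a n = (lam k : ℝ) / (n + 1))
  (hzero : ∀ n, (¬∃ k, 1 ≤ k ∧ 2 ^ k + 1 ≤ n + 1 ∧ n + 1 < 2 ^ (k + 1)) → a n = 0)

include hbin hblock hzero in
theorem eq_zero_or_eq_inv_succ_of_dyadic_block (n : ℕ) : a n = 0 ∨ a n = ((n : ℝ) + 1)⁻¹ := by
  by_cases h : ∃ k, 1 ≤ k ∧ 2 ^ k + 1 ≤ n + 1 ∧ n + 1 < 2 ^ (k + 1)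
  · obtain ⟨k, hk, hlow, hhigh⟩ := h
    rw [hblock k n hk hlow hhigh]
    rcases hbin k with h | h <;> simp [h]
  · exact .inl (hzero n h)

include hbin hblock hzero in
theorem nonneg_of_dyadic_block (n : ℕ) : 0 ≤ a n := by
  rcases eq_zero_or_eq_inv_succ_of_dyadic_block hbin hblock hzero n with h | h <;> rw [h]
  positivity

include hbin hblock hzero in
theorem le_inv_succ_of_dyadic_block (n : ℕ) : a n ≤ ((n : ℝ) + 1)⁻¹ := by
  rcases eq_zero_or_eq_inv_succ_of_dyadic_block hbin hblock hzero n with h | h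
  · rw [h]; positivity
  · exact h.le

include hbin hblock in
theorem sub_succ_mem_Icc_of_notMem_predTwoPow {j : ℕ} (hj : j ∉ predTwoPow) :
    a (2 * j) - a (2 * j + 1) ∈ Set.Icc 0 (((j : ℝ) + 1) ^ 2)⁻¹ := by
  obtain ⟨k, hk, hlow, hhigh⟩ := exists_dyadic_block_of_notMem_predTwoPow hj
  rw [hblock k (2 * j) hk hlow (by omega), hblock k (2 * j + 1) hk (by omega) hhigh]
  push_cast
  rcases hbin k with h | h
  · rw [h, Nat.cast_zero, zero_div, zero_div, sub_self]
    exact ⟨le_rfl, by positivity⟩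
  · refine ⟨?_, ?_⟩ <;> simp only [h, Nat.cast_one, one_div, sub_nonneg]
    · gcongr; linarith
    · rw [add_assoc, one_add_one_eq_two]
      exact inv_sub_inv_two_mul_succ_le j

include hbin hblock hzero in
theorem sub_succ_mem_Icc_of_mem_predTwoPow {j : ℕ} (hj : j ∈ predTwoPow) :
    a (2 * j) - a (2 * j + 1) ∈ Set.Icc 0 ((j : ℝ) + 1)⁻¹ := by
  obtain ⟨k, hk⟩ := hj
  have hgap : a (2 * j + 1) = 0 := hzero _ fun ⟨k', _, hlow, hhigh⟩ =>
    two_pow_notMem_dyadic_block (k + 1) k' ⟨by rw [pow_succ]; omega, by rw [pow_succ]; omega⟩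
  rw [hgap, sub_zero]
  refine ⟨nonneg_of_dyadic_block hbin hblock hzero _,
    (le_inv_succ_of_dyadic_block hbin hblock hzero _).trans ?_⟩
  gcongr
  linarith

include hbin hblock hzero in
theorem sub_succ_mem_Icc_of_dyadic_block (j : ℕ) :
    a (2 * j) - a (2 * j + 1) ∈ Set.Icc 0
      ((((j : ℝ) + 1) ^ 2)⁻¹ + predTwoPow.indicator (fun j => ((j : ℝ) + 1)⁻¹) j) := by
  by_cases hj : j ∈ predTwoPow
  · obtain ⟨h0, h1⟩ := sub_succ_mem_Icc_of_mem_predTwoPow hbin hblock hzero hj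
    rw [Set.indicator_of_mem hj]
    exact ⟨h0, h1.trans (le_add_of_nonneg_left (by positivity))⟩
  · rw [Set.indicator_of_notMem hj, add_zero]
    exact sub_succ_mem_Icc_of_notMem_predTwoPow hbin hblock hj

end DyadicBlocks

/-- With `a n = λ k / (n+1)` on the dyadic block `2^k + 1 ≤ n + 1 < 2^(k+1)` (for `k ≥ 1`)
and `a n = 0` otherwise, the alternating series `∑ (-1)^n a n` converges. -/
theorem alternating_blocks_converge (lam : ℕ → ℕ) (a : ℕ → ℝ)
    (hbin : ∀ k, lam k = 0 ∨ lam k = 1)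
    (hblock : ∀ k n, 1 ≤ k → 2 ^ k + 1 ≤ n + 1 → n + 1 < 2 ^ (k + 1) →
      a n = (lam k : ℝ) / (n + 1))
    (hzero : ∀ n, (¬∃ k, 1 ≤ k ∧ 2 ^ k + 1 ≤ n + 1 ∧ n + 1 < 2 ^ (k + 1)) → a n = 0) :
    ∃ s, SeriesConvTo (fun n => (-1 : ℝ) ^ n * a n) s := by
  have hpairs := sub_succ_mem_Icc_of_dyadic_block hbin hblock hzero
  obtain ⟨t, ht⟩ := (summable_inv_nat_succ_sq.add summable_indicator_predTwoPow_inv_succ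
    ).of_nonneg_of_le (fun j => (hpairs j).1) (fun j => (hpairs j).2)
  refine ⟨t, tendsto_sum_range_of_hasSum_pairs ?_ ?_⟩
  · have hlim : Tendsto (fun n : ℕ => ((n : ℝ) + 1)⁻¹) atTop (𝓝 0) := by
      simpa only [one_div] using tendsto_one_div_add_atTop_nhds_zero_nat (𝕜 := ℝ)
    refine squeeze_zero_norm (fun n => ?_) hlim
    rw [norm_mul, norm_pow, norm_neg, norm_one, one_pow, one_mul,
      Real.norm_of_nonneg (nonneg_of_dyadic_block hbin hblock hzero n)]
    exact le_inv_succ_of_dyadic_block hbin hblock hzero n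
  · simpa [pow_mul, pow_succ, sub_eq_add_neg] using ht
end

section
/- Let S = {s₁, s₂, …} be an inhabited, countable, pseudobounded subset of ℕ with s₁ ≤ s₂ ≤ ⋯, let (λ_k) be a binary sequence with λ_k = 1 if s_{2^{k+1}} > s_{2^k} and λ_k = 0 if s_{2^{k+1}} = s_{2^k}, and define aₙ = λ_k/(n+1) for 2^k + 1 ≤ n + 1 < 2^{k+1}. If ∑ aₙ converges, then S is bounded. -/
/-!
Convergence of `∑ aₙ` makes the block sums over `[2^k, 2^(k+1) - 1)` eventually smaller than `1/4`.
Whenever `λ_k = 1`, that block sum is a harmonic block sum, which is at least `1/4`; so `λ_k = 0`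
for all large `k`, i.e. `s` is constant along `2^k` from some point on, and a monotone sequence
constant along an unbounded sequence of indices is bounded.
-/

open Filter Finset

theorem SeriesConvTo.exists_abs_sum_Ico_lt {a : ℕ → ℝ} {l : ℝ} (h : SeriesConvTo a l) {ε : ℝ}
    (hε : 0 < ε) : ∃ N, ∀ m n, N ≤ m → m ≤ n → |∑ i ∈ Ico m n, a i| < ε := by
  obtain ⟨N, hN⟩ := Metric.cauchySeq_iff.1 h.cauchySeq ε hε
  refine ⟨N, fun m n hNm hmn => ?_⟩
  rw [sum_Ico_eq_sub _ hmn, ← Real.dist_eq]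
  exact hN n (hNm.trans hmn) m hNm

theorem one_div_four_le_sum_Ico_two_pow {k : ℕ} (hk : 1 ≤ k) :
    (1 : ℝ) / 4 ≤ ∑ i ∈ Ico (2 ^ k : ℕ) (2 ^ (k + 1) - 1), 1 / ((i : ℝ) + 1) := by
  have h2k : 2 ≤ 2 ^ k := by simpa using Nat.pow_le_pow_right two_pos hk
  have hpow : 2 ^ (k + 1) = 2 * 2 ^ k := by ring
  have hterm : ∀ i ∈ Ico (2 ^ k : ℕ) (2 ^ (k + 1) - 1),
      1 / (2 : ℝ) ^ (k + 1) ≤ 1 / ((i : ℝ) + 1) := by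
    intro i hi
    have hi' : i + 1 ≤ 2 ^ (k + 1) := by rw [mem_Ico] at hi; omega
    gcongr
    exact_mod_cast hi'
  have hcard : ((#(Ico (2 ^ k : ℕ) (2 ^ (k + 1) - 1)) : ℕ) : ℝ) = 2 ^ k - 1 := by
    rw [Nat.card_Ico, hpow, Nat.cast_sub (by omega), Nat.cast_sub (by omega)]
    push_cast
    ring
  calc (1 : ℝ) / 4 ≤ ((2 : ℝ) ^ k - 1) * (1 / 2 ^ (k + 1)) := by
        have : (2 : ℝ) ≤ 2 ^ k := by exact_mod_cast h2k
        rw [mul_one_div, le_div_iff₀ (by positivity), pow_succ]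
        nlinarith
    _ ≤ _ := by
        rw [← hcard, ← nsmul_eq_mul]
        exact card_nsmul_le_sum _ _ _ hterm

theorem Monotone.le_of_eventually_const_comp {α : Type*} [Preorder α] {s : ℕ → α}
    (hs : Monotone s) {u : ℕ → ℕ} (hu : Tendsto u atTop atTop) {K : ℕ}
    (hconst : ∀ k, K ≤ k → s (u (k + 1)) = s (u k)) (n : ℕ) : s n ≤ s (u K) := by
  obtain ⟨m, hnm, hKm⟩ := ((hu.eventually_ge_atTop n).and (eventually_ge_atTop K)).exists
  have hsm : s (u m) = s (u K) := by
    clear hnm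
    induction m, hKm using Nat.le_induction with
    | base => rfl
    | succ m hKm ih => rw [hconst m hKm, ih]
  exact hsm ▸ hs hnm

theorem lemma42_ii_general (s : ℕ → ℕ) (lam : ℕ → ℕ) (a : ℕ → ℝ)
    (hmono : Monotone s)
    (hlam1 : ∀ k, s (2 ^ k) < s (2 ^ (k + 1)) → lam k = 1)
    (hblock : ∀ k n, 1 ≤ k → 2 ^ k + 1 ≤ n + 1 → n + 1 < 2 ^ (k + 1) →
      a n = (lam k : ℝ) / (n + 1))
    (hconv : ∃ l, SeriesConvTo a l) :
    ∃ N, ∀ n, s n < N := by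
  obtain ⟨l, hl⟩ := hconv
  obtain ⟨N, hN⟩ := hl.exists_abs_sum_Ico_lt (ε := 1 / 4) (by norm_num)
  have hconst : ∀ k, N + 1 ≤ k → s (2 ^ (k + 1)) = s (2 ^ k) := by
    intro k hk
    by_contra hne
    have hk1 : 1 ≤ k := by omega
    have hNk : N ≤ 2 ^ k :=
      (Nat.lt_two_pow_self.trans_le (Nat.pow_le_pow_right two_pos (by omega))).le
    have hlt : 2 ^ k ≤ 2 ^ (k + 1) - 1 := by rw [pow_succ]; omega
    have hblock_sum : ∑ i ∈ Ico (2 ^ k) (2 ^ (k + 1) - 1), a i =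
        ∑ i ∈ Ico (2 ^ k : ℕ) (2 ^ (k + 1) - 1), 1 / ((i : ℝ) + 1) := by
      refine sum_congr rfl fun i hi => ?_
      rw [mem_Ico] at hi
      rw [hblock k i hk1 (by omega) (by omega),
        hlam1 k ((hmono (Nat.pow_le_pow_right two_pos k.le_succ)).lt_of_ne' hne), Nat.cast_one]
    have hsmall := (abs_lt.1 (hN _ _ hNk hlt)).2
    linarith [one_div_four_le_sum_Ico_two_pow hk1]
  exact ⟨s (2 ^ (N + 1)) + 1, fun n => Nat.lt_succ_of_le <|
    hmono.le_of_eventually_const_comp (tendsto_pow_atTop_atTop_of_one_lt one_lt_two) hconst n⟩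

/-- Property (ii) of Lemma 4.2: with `s` nondecreasing and pseudobounded, `λ` recording
whether `s` increases across dyadic blocks, and `a` built from `λ`, convergence of
`∑ a n` implies the set `{s n : n}` is bounded. -/
theorem lemma42_ii (s : ℕ → ℕ) (lam : ℕ → ℕ) (a : ℕ → ℝ)
    (hmono : Monotone s)
    (hpseudo : Filter.Tendsto (fun n => (s n : ℝ) / n) Filter.atTop (nhds 0))
    (hlam1 : ∀ k, s (2 ^ k) < s (2 ^ (k + 1)) → lam k = 1)
    (hlam0 : ∀ k, s (2 ^ (k + 1)) = s (2 ^ k) → lam k = 0)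
    (hblock : ∀ k n, 1 ≤ k → 2 ^ k + 1 ≤ n + 1 → n + 1 < 2 ^ (k + 1) →
      a n = (lam k : ℝ) / (n + 1))
    (hconv : ∃ l, SeriesConvTo a l) :
    ∃ N, ∀ n, s n < N :=
  lemma42_ii_general s lam a hmono hlam1 hblock hconv
end
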